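/- Let C be a category with pullbacks of split epimorphisms along split epimorphisms. Then C is Mal'tsev (every reflexive relation in C is symmetric) if and only if every directed kite in C whose direction span is a jointly monic span whose legs admit kernel pairs is admissible. -/
import Mathlib


open CategoryTheory

universe v u

section Defs

variable {C : Type u} [Category.{v} C]

/-- A pair of morphisms with common domain is jointly monic. -/
def JointlyMonic {E A B : C} (p1 : E ⟶ A) (p2 : E ⟶ B) : Prop :=
  ∀ {Z : C} (u v : Z ⟶ E), u ≫ p1 = v ≫ p1 → u ≫ p2 = v ≫ p2 → u = v

/-- `(P, p1, p2)` is a pullback of `f` and `g`. -/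
structure IsPb {P A B X : C} (p1 : P ⟶ A) (p2 : P ⟶ B) (f : A ⟶ X) (g : B ⟶ X) : Prop where
  comm : p1 ≫ f = p2 ≫ g
  univ : ∀ {Z : C} (a : Z ⟶ A) (b : Z ⟶ B), a ≫ f = b ≫ g →
    ∃! l : Z ⟶ P, l ≫ p1 = a ∧ l ≫ p2 = b

/-- The data of a span `(D, d, c)` with `d : D ⟶ D0` and `c : D ⟶ D1`. -/
structure SpanData (C : Type u) [Category.{v} C] where
  D : C
  D0 : C
  D1 : C
  d : D ⟶ D0
  c : D ⟶ D1

/-- The morphism `d` admits a kernel pair. -/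
def HasKernelPair {D D0 : C} (d : D ⟶ D0) : Prop :=
  ∃ (K : C) (k1 k2 : K ⟶ D), IsPb k1 k2 d d

/-- The (raw) data of a directed kite. -/
structure DiKite (C : Type u) [Category.{v} C] where
  A : C
  B : C
  Cc : C
  D : C
  D0 : C
  D1 : C
  f : A ⟶ B
  r : B ⟶ A
  g : Cc ⟶ B
  s : B ⟶ Cc
  α : A ⟶ D
  β : B ⟶ D
  γ : Cc ⟶ D
  d : D ⟶ D0
  c : D ⟶ D1

/-- The directed kite axioms. -/
def DiKite.IsKite (K : DiKite C) : Prop :=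
  K.r ≫ K.f = 𝟙 K.B ∧ K.s ≫ K.g = 𝟙 K.B ∧
  K.r ≫ K.α = K.β ∧ K.s ≫ K.γ = K.β ∧
  K.α ≫ K.d = K.f ≫ K.β ≫ K.d ∧
  K.g ≫ K.β ≫ K.c = K.γ ≫ K.c

/-- The direction span of a directed kite. -/
def DiKite.spanPart (K : DiKite C) : SpanData C := ⟨K.D, K.D0, K.D1, K.d, K.c⟩

/-- `m` is a multiplication for the directed kite `K`,
relative to pullback projections `π1`, `π2` of `K.f`, `K.g`. -/
def IsMult (K : DiKite C) {P : C} (π1 : P ⟶ K.A) (π2 : P ⟶ K.Cc) (m : P ⟶ K.D) : Prop :=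
  (∀ e1 : K.A ⟶ P, e1 ≫ π1 = 𝟙 K.A → e1 ≫ π2 = K.f ≫ K.s → e1 ≫ m = K.α) ∧
  (∀ e2 : K.Cc ⟶ P, e2 ≫ π1 = K.g ≫ K.r → e2 ≫ π2 = 𝟙 K.Cc → e2 ≫ m = K.γ) ∧
  m ≫ K.d = π2 ≫ K.γ ≫ K.d ∧
  m ≫ K.c = π1 ≫ K.α ≫ K.c

/-- The directed kite `K` is admissible: it has exactly one multiplication. -/
def DiKite.Admissible (K : DiKite C) : Prop :=
  ∀ {P : C} (π1 : P ⟶ K.A) (π2 : P ⟶ K.Cc), IsPb π1 π2 K.f K.g →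
    ∃! m : P ⟶ K.D, IsMult K π1 π2 m

/-- `(e1, p1, e2, p2)` is a local product. -/
def IsLocalProduct {A Cc E : C} (e1 : A ⟶ E) (p1 : E ⟶ A) (e2 : Cc ⟶ E) (p2 : E ⟶ Cc) :
    Prop :=
  ∃ (B : C) (f : A ⟶ B) (r : B ⟶ A) (g : Cc ⟶ B) (s : B ⟶ Cc),
    r ≫ f = 𝟙 B ∧ s ≫ g = 𝟙 B ∧ IsPb p1 p2 f g ∧
    e1 ≫ p1 = 𝟙 A ∧ e1 ≫ p2 = f ≫ s ∧ e2 ≫ p1 = g ≫ r ∧ e2 ≫ p2 = 𝟙 Cc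

/-- `(T, dom, mid, cod)` is the object of compatible triples of the span `(D, d, c)`
(the kernel pair construction). -/
structure IsTripleObj {D D0 D1 : C} (d : D ⟶ D0) (c : D ⟶ D1) {T : C}
    (dom mid cod : T ⟶ D) : Prop where
  d_dom : dom ≫ d = mid ≫ d
  c_mid : mid ≫ c = cod ≫ c
  univ : ∀ {Z : C} (x y z : Z ⟶ D), x ≫ d = y ≫ d → y ≫ c = z ≫ c →
    ∃! l : Z ⟶ T, l ≫ dom = x ∧ l ≫ mid = y ∧ l ≫ cod = z

/-- `(Bx, q1, q2, q3, q4)` is the box object of the span `(D, d, c)`. -/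
structure IsBoxObj {D D0 D1 : C} (d : D ⟶ D0) (c : D ⟶ D1) {Bx : C}
    (q1 q2 q3 q4 : Bx ⟶ D) : Prop where
  h12 : q1 ≫ d = q2 ≫ d
  h23 : q2 ≫ c = q3 ≫ c
  h34 : q3 ≫ d = q4 ≫ d
  h41 : q4 ≫ c = q1 ≫ c
  univ : ∀ {Z : C} (x y z w : Z ⟶ D), x ≫ d = y ≫ d → y ≫ c = z ≫ c →
    z ≫ d = w ≫ d → w ≫ c = x ≫ c →
    ∃! l : Z ⟶ Bx, l ≫ q1 = x ∧ l ≫ q2 = y ∧ l ≫ q3 = z ∧ l ≫ q4 = w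

/-- A natural pregroupoid structure on the span `(D, d, c)`. -/
structure PregroupoidStr {D D0 D1 : C} (d : D ⟶ D0) (c : D ⟶ D1) where
  p : ∀ {Z : C} (x y z : Z ⟶ D), x ≫ d = y ≫ d → y ≫ c = z ≫ c → (Z ⟶ D)
  natural : ∀ {Z' Z : C} (h : Z' ⟶ Z) (x y z : Z ⟶ D)
    (hd : x ≫ d = y ≫ d) (hc : y ≫ c = z ≫ c)
    (hd' : (h ≫ x) ≫ d = (h ≫ y) ≫ d) (hc' : (h ≫ y) ≫ c = (h ≫ z) ≫ c),
    p (h ≫ x) (h ≫ y) (h ≫ z) hd' hc' = h ≫ p x y z hd hc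
  comp_d : ∀ {Z : C} (x y z : Z ⟶ D) (hd : x ≫ d = y ≫ d) (hc : y ≫ c = z ≫ c),
    p x y z hd hc ≫ d = z ≫ d
  comp_c : ∀ {Z : C} (x y z : Z ⟶ D) (hd : x ≫ d = y ≫ d) (hc : y ≫ c = z ≫ c),
    p x y z hd hc ≫ c = x ≫ c
  p_xyy : ∀ {Z : C} (x y : Z ⟶ D) (hd : x ≫ d = y ≫ d) (hc : y ≫ c = y ≫ c),
    p x y y hd hc = x
  p_yyz : ∀ {Z : C} (y z : Z ⟶ D) (hd : y ≫ d = y ≫ d) (hc : y ≫ c = z ≫ c),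
    p y y z hd hc = z

/-- Associativity of a pregroupoid structure. -/
def PregroupoidStr.Assoc {D D0 D1 : C} {d : D ⟶ D0} {c : D ⟶ D1}
    (P : PregroupoidStr d c) : Prop :=
  ∀ {Z : C} (u v x y z : Z ⟶ D)
    (huv : u ≫ d = v ≫ d) (hvx : v ≫ c = x ≫ c)
    (hxy : x ≫ d = y ≫ d) (hyz : y ≫ c = z ≫ c)
    (h1 : v ≫ c = (P.p x y z hxy hyz) ≫ c)
    (h2 : (P.p u v x huv hvx) ≫ d = y ≫ d),
    P.p u v (P.p x y z hxy hyz) huv h1 = P.p (P.p u v x huv hvx) y z h2 hyz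

end Defs

/-- `C` has pullbacks of split epimorphisms along split epimorphisms. -/
def HasPbSplit (C : Type u) [Category.{v} C] : Prop :=
  ∀ {A B Cc : C} (f : A ⟶ B) (r : B ⟶ A) (g : Cc ⟶ B) (s : B ⟶ Cc),
    r ≫ f = 𝟙 B → s ≫ g = 𝟙 B →
    ∃ (P : C) (p1 : P ⟶ A) (p2 : P ⟶ Cc), IsPb p1 p2 f g

/-- The class `M` contains the span part of every local product. -/
def ContainsLocalProducts {C : Type u} [Category.{v} C] (M : Set (SpanData C)) : Prop :=
  ∀ {A B Cc E : C} (f : A ⟶ B) (r : B ⟶ A) (g : Cc ⟶ B) (s : B ⟶ Cc)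
    (p1 : E ⟶ A) (p2 : E ⟶ Cc),
    r ≫ f = 𝟙 B → s ≫ g = 𝟙 B → IsPb p1 p2 f g →
    SpanData.mk E A Cc p1 p2 ∈ M

/-- The class `M` is closed under the kernel pair construction. -/
def ClosedUnderKP {C : Type u} [Category.{v} C] (M : Set (SpanData C)) : Prop :=
  ∀ S ∈ M, ∀ {T : C} (dom mid cod : T ⟶ S.D),
    IsTripleObj S.d S.c dom mid cod → SpanData.mk T S.D S.D dom cod ∈ M

/-- Every reflexive relation in `C` is symmetric
(the defining property of a Mal'tsev category). -/
def MaltsevProp (C : Type u) [Category.{v} C] : Prop :=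
  ∀ {X D : C} (d c : D ⟶ X) (e : X ⟶ D), JointlyMonic d c →
    e ≫ d = 𝟙 X → e ≫ c = 𝟙 X → ∃ σ : D ⟶ D, σ ≫ d = c ∧ σ ≫ c = d

/-- The span `(D, d, c)` is difunctional. -/
def Difunctional {C : Type u} [Category.{v} C] {D D0 D1 : C}
    (d : D ⟶ D0) (c : D ⟶ D1) : Prop :=
  ∀ {Z : C} (x y z : Z ⟶ D), x ≫ d = y ≫ d → y ≫ c = z ≫ c →
    ∃ w : Z ⟶ D, w ≫ d = z ≫ d ∧ w ≫ c = x ≫ c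

section Aux

variable {C : Type u} [Category.{v} C]

lemma IsPb.jm {P A B X : C} {p1 : P ⟶ A} {p2 : P ⟶ B} {f : A ⟶ X} {g : B ⟶ X}
    (h : IsPb p1 p2 f g) : JointlyMonic p1 p2 := by
  intro Z u v h1 h2
  obtain ⟨l, -, hu⟩ := h.univ (v ≫ p1) (v ≫ p2)
    (by rw [Category.assoc, Category.assoc, h.comm])
  rw [hu u ⟨h1, h2⟩, hu v ⟨rfl, rfl⟩]

lemma kp_diag {K D X : C} {k1 k2 : K ⟶ D} {d : D ⟶ X} (h : IsPb k1 k2 d d) :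
    ∃ δ : D ⟶ K, δ ≫ k1 = 𝟙 D ∧ δ ≫ k2 = 𝟙 D := by
  obtain ⟨δ, hδ, -⟩ := h.univ (𝟙 D) (𝟙 D) rfl
  exact ⟨δ, hδ⟩

/-- A Mal'tsev category makes jointly monic spans with kernel pairs difunctional. -/
lemma maltsev_difunctional (hPb : HasPbSplit C) (hM : MaltsevProp C)
    {D D0 D1 : C} (d : D ⟶ D0) (c : D ⟶ D1) (jm : JointlyMonic d c)
    (hd : HasKernelPair d) (hc : HasKernelPair c) : Difunctional d c := by
  obtain ⟨Kd, k1, k2, hKd⟩ := hd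
  obtain ⟨Kc, c1, c2, hKc⟩ := hc
  obtain ⟨δd, hδd1, hδd2⟩ := kp_diag hKd
  obtain ⟨δc, hδc1, hδc2⟩ := kp_diag hKc
  obtain ⟨T, t1, t2, hT⟩ := hPb k2 δd c1 δc hδd2 hδc1
  have hTc := reassoc_of% hT.comm
  have hKdc : k1 ≫ d = k2 ≫ d := hKd.comm
  have hKcc : c1 ≫ c = c2 ≫ c := hKc.comm
  -- reflexivity of the triple object of (d, c)
  obtain ⟨eT, heT1, -⟩ := hT.univ δd δc (by rw [hδd2, hδc1])
  have heTdom : eT ≫ t1 ≫ k1 = 𝟙 D := by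
    rw [← Category.assoc, heT1.1, hδd1]
  have heTcod : eT ≫ t2 ≫ c2 = 𝟙 D := by
    rw [← Category.assoc, heT1.2, hδc2]
  -- joint monicity of (dom, cod)
  have jmT : JointlyMonic (t1 ≫ k1) (t2 ≫ c2) := by
    intro Z u v h1 h2
    have h1' := reassoc_of% h1
    have h2' := reassoc_of% h2
    have hm : u ≫ t1 ≫ k2 = v ≫ t1 ≫ k2 := by
      apply jm
      · simp only [Category.assoc]
        rw [← hKdc, h1']
      · simp only [Category.assoc]
        rw [hTc, hKcc, h2']
    refine hT.jm u v (hKd.jm _ _ ?_ ?_) (hKc.jm _ _ ?_ ?_)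
    · simpa only [Category.assoc] using h1
    · simpa only [Category.assoc] using hm
    · simp only [Category.assoc]
      rw [← hT.comm]
      exact hm
    · simpa only [Category.assoc] using h2
  obtain ⟨σ, hσ1, hσ2⟩ := hM (t1 ≫ k1) (t2 ≫ c2) eT jmT heTdom heTcod
  intro Z x y z hxy hyz
  obtain ⟨u, hu, -⟩ := hKd.univ x y hxy
  obtain ⟨v, hv, -⟩ := hKc.univ y z hyz
  obtain ⟨l, hl, -⟩ := hT.univ u v (by rw [hu.2, hv.1])
  refine ⟨l ≫ σ ≫ t1 ≫ k2, ?_, ?_⟩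
  · simp only [Category.assoc]
    rw [← hKdc, reassoc_of% hσ1, reassoc_of% hl.2, ← Category.assoc, hv.2]
  · simp only [Category.assoc]
    rw [hTc, hKcc, reassoc_of% hσ2, reassoc_of% hl.1, ← Category.assoc, hu.1]

/-- Admissibility of directed kites makes jointly monic spans with kernel
pairs difunctional. -/
lemma adm_difunctional (hPb : HasPbSplit C)
    (hAdm : ∀ K : DiKite C, K.IsKite → JointlyMonic K.d K.c →
      HasKernelPair K.d → HasKernelPair K.c → K.Admissible)
    {D D0 D1 : C} (d : D ⟶ D0) (c : D ⟶ D1) (jm : JointlyMonic d c)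
    (hd : HasKernelPair d) (hc : HasKernelPair c) : Difunctional d c := by
  obtain ⟨Kd, k1, k2, hKd⟩ := hd
  obtain ⟨Kc, c1, c2, hKc⟩ := hc
  obtain ⟨δd, hδd1, hδd2⟩ := kp_diag hKd
  obtain ⟨δc, hδc1, hδc2⟩ := kp_diag hKc
  have hKite : DiKite.IsKite (C := C)
      ⟨Kd, D, Kc, D, D0, D1, k1, δd, c2, δc, k2, 𝟙 D, c1, d, c⟩ := by
    refine ⟨hδd1, hδc2, hδd2, hδc1, ?_, ?_⟩
    · show k2 ≫ d = k1 ≫ 𝟙 D ≫ d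
      rw [Category.id_comp, hKd.comm]
    · show c2 ≫ 𝟙 D ≫ c = c1 ≫ c
      rw [Category.id_comp, hKc.comm]
  obtain ⟨P, p1, p2, hP⟩ := hPb k1 δd c2 δc hδd1 hδc2
  obtain ⟨m, hm, -⟩ := hAdm ⟨Kd, D, Kc, D, D0, D1, k1, δd, c2, δc, k2, 𝟙 D, c1, d, c⟩
    hKite jm ⟨Kd, k1, k2, hKd⟩ ⟨Kc, c1, c2, hKc⟩ p1 p2 hP
  obtain ⟨-, -, hmd, hmc⟩ := hm
  have hmd' : m ≫ d = p2 ≫ c1 ≫ d := hmd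
  have hmc' : m ≫ c = p1 ≫ k2 ≫ c := hmc
  intro Z x y z hxy hyz
  obtain ⟨u, hu, -⟩ := hKd.univ y x hxy.symm
  obtain ⟨v, hv, -⟩ := hKc.univ z y hyz.symm
  obtain ⟨l, hl, -⟩ := hP.univ u v (by rw [hu.1, hv.2])
  refine ⟨l ≫ m, ?_, ?_⟩
  · simp only [Category.assoc]
    rw [hmd', reassoc_of% hl.2, ← Category.assoc, hv.1]
  · simp only [Category.assoc]
    rw [hmc', reassoc_of% hl.1, ← Category.assoc, hu.2]

/-- A directed kite with difunctional jointly monic direction is admissible. -/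
lemma difunctional_admissible (K : DiKite C) (hK : K.IsKite)
    (jm : JointlyMonic K.d K.c) (hdif : Difunctional K.d K.c) : K.Admissible := by
  obtain ⟨hrf, hsg, hrα, hsγ, hαd, hgβc⟩ := hK
  intro P π1 π2 hP
  have hxy : (π1 ≫ K.α) ≫ K.d = (π1 ≫ K.f ≫ K.β) ≫ K.d := by
    simp only [Category.assoc]
    rw [hαd]
  have hyz : (π1 ≫ K.f ≫ K.β) ≫ K.c = (π2 ≫ K.γ) ≫ K.c := by
    simp only [Category.assoc]
    rw [← hgβc, reassoc_of% hP.comm]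
  obtain ⟨m, hmd, hmc⟩ := hdif (π1 ≫ K.α) (π1 ≫ K.f ≫ K.β) (π2 ≫ K.γ) hxy hyz
  have hmd' : m ≫ K.d = π2 ≫ K.γ ≫ K.d := by rw [hmd, Category.assoc]
  have hmc' : m ≫ K.c = π1 ≫ K.α ≫ K.c := by rw [hmc, Category.assoc]
  refine ⟨m, ⟨?_, ?_, hmd', hmc'⟩, ?_⟩
  · intro e1 he11 he12
    apply jm
    · simp only [Category.assoc]
      rw [hmd', reassoc_of% he12, reassoc_of% hsγ, ← hαd]
    · simp only [Category.assoc]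
      rw [hmc', ← Category.assoc, he11, Category.id_comp]
  · intro e2 he21 he22
    apply jm
    · simp only [Category.assoc]
      rw [hmd', ← Category.assoc, he22, Category.id_comp]
    · simp only [Category.assoc]
      rw [hmc', reassoc_of% he21, reassoc_of% hrα, hgβc]
  · rintro m' ⟨-, -, hm'd, hm'c⟩
    exact jm m' m (by rw [hm'd, hmd']) (by rw [hm'c, hmc'])

end Aux

theorem statement13 {C : Type u} [Category.{v} C] (hPb : HasPbSplit C) :
    MaltsevProp C ↔
      ∀ K : DiKite C, K.IsKite → JointlyMonic K.d K.c →
        HasKernelPair K.d → HasKernelPair K.c → K.Admissible := by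
  constructor
  · intro hM K hK jm hd hc
    exact difunctional_admissible K hK jm (maltsev_difunctional hPb hM K.d K.c jm hd hc)
  · intro hAdm X D d c e jm he1 he2
    have hd : HasKernelPair d := by
      obtain ⟨P, p1, p2, hP⟩ := hPb d e d e he1 he1
      exact ⟨P, p1, p2, hP⟩
    have hc : HasKernelPair c := by
      obtain ⟨P, p1, p2, hP⟩ := hPb c e c e he2 he2
      exact ⟨P, p1, p2, hP⟩
    have hdif : Difunctional d c := adm_difunctional hPb hAdm d c jm hd hc
    obtain ⟨σ, hσd, hσc⟩ := hdif (d ≫ e) (𝟙 D) (c ≫ e)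
      (by rw [Category.id_comp, Category.assoc, he1, Category.comp_id])
      (by rw [Category.id_comp, Category.assoc, he2, Category.comp_id])
    refine ⟨σ, ?_, ?_⟩
    · rw [hσd, Category.assoc, he1, Category.comp_id]
    · rw [hσc, Category.assoc, he2, Category.comp_id]
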